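/- Let P be a double histogram and let s be a vertex of P. Then I^3(s) = I^2(bd(s)) ∪ I^2(td(s)), where I^2(v) denotes the second interval of the vertex v under the same inductive definition. -/

import Mathlib

open Classical Set

noncomputable section

/-- A *double histogram*: an `x`-monotone orthogonal polygon in general position whose
base line lies on the `x`-axis.  It is described by its bottom columns (over the
breakpoints `xs` with depths `d < 0`) and its top columns (over the breakpoints `ys`
with heights `h > 0`).  A *simple histogram* is the special case `n = 1`, where the
upper boundary is the single (base) edge at height `h 0`. -/
structure DoubleHistogram where
  m : ℕ
  n : ℕ
  hm : 0 < m
  hn : 0 < n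
  xs : Fin (m + 1) → ℝ
  ys : Fin (n + 1) → ℝ
  d : Fin m → ℝ
  h : Fin n → ℝ
  xs_mono : StrictMono xs
  ys_mono : StrictMono ys
  left_eq : ys 0 = xs 0
  right_eq : ys (Fin.last n) = xs (Fin.last m)
  d_neg : ∀ i, d i < 0
  h_pos : ∀ j, 0 < h j
  /-- general position: no three vertices on a horizontal line -/
  d_inj : Function.Injective d
  h_inj : Function.Injective h
  /-- general position: no three vertices on a vertical line -/
  gen_pos : ∀ (i : Fin (m + 1)) (j : Fin (n + 1)), xs i = ys j →
      (i = 0 ∧ j = 0) ∨ (i = Fin.last m ∧ j = Fin.last n)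

/-- Among the reals in `A`, the one of minimum absolute value
(i.e. "closest to the base line"). -/
def closestToBase (A : Set ℝ) : ℝ :=
  sSup {y | y ∈ A ∧ ∀ y' ∈ A, |y| ≤ |y'|}

/-- The leftmost point of `S` among those minimizing the distance `|y|` to the base line. -/
def leftmostLowest (S : Set (ℝ × ℝ)) : ℝ × ℝ :=
  (sInf {x | ∃ y, (x, y) ∈ S ∧ ∀ q ∈ S, |y| ≤ |q.2|},
    closestToBase {y | (sInf {x | ∃ y', (x, y') ∈ S ∧ ∀ q ∈ S, |y'| ≤ |q.2|}, y) ∈ S})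

namespace DoubleHistogram

variable (H : DoubleHistogram)

/-- The polygon `P`, as a closed region of the plane. -/
def region : Set (ℝ × ℝ) :=
  (⋃ i : Fin H.m, Icc (H.xs i.castSucc) (H.xs i.succ) ×ˢ Icc (H.d i) 0) ∪
    ⋃ j : Fin H.n, Icc (H.ys j.castSucc) (H.ys j.succ) ×ˢ Icc 0 (H.h j)

/-- The vertex set `V(P)`. -/
def verts : Set (ℝ × ℝ) :=
  (⋃ i : Fin H.m,
      ({(H.xs i.castSucc, H.d i), (H.xs i.succ, H.d i)} : Set (ℝ × ℝ))) ∪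
    ⋃ j : Fin H.n,
      ({(H.ys j.castSucc, H.h j), (H.ys j.succ, H.h j)} : Set (ℝ × ℝ))

/-- `p` and `q` are co-visible: the axis-parallel rectangle they span lies in `P`. -/
def covisible (p q : ℝ × ℝ) : Prop :=
  Icc (min p.1 q.1) (max p.1 q.1) ×ˢ Icc (min p.2 q.2) (max p.2 q.2) ⊆ H.region

lemma covisible_symm {p q : ℝ × ℝ} (hpq : H.covisible p q) : H.covisible q p := by
  unfold covisible at hpq ⊢
  rwa [min_comm q.1 p.1, max_comm q.1 p.1, min_comm q.2 p.2, max_comm q.2 p.2]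

/-- The (unweighted) visibility graph `G(P)` on the vertices of `P`. -/
def visGraph : SimpleGraph ↥H.verts where
  Adj u v := u ≠ v ∧ H.covisible ↑u ↑v
  symm := ⟨fun _ _ hu => ⟨hu.1.symm, H.covisible_symm hu.2⟩⟩
  loopless := ⟨fun _ hu => hu.1 rfl⟩

/-- The closed neighborhood `N(v)`: `v` together with the vertices it sees. -/
def Nbr (v : ℝ × ℝ) : Set (ℝ × ℝ) :=
  {w | w ∈ H.verts ∧ (w = v ∨ H.covisible v w)}

/-- The abscissa where the leftward horizontal ray from `v` hits the boundary of `P`. -/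
def lhit (v : ℝ × ℝ) : ℝ :=
  sInf {x | x ≤ v.1 ∧ Icc x v.1 ×ˢ ({v.2} : Set ℝ) ⊆ H.region}

/-- The abscissa where the rightward horizontal ray from `v` hits the boundary of `P`. -/
def rhit (v : ℝ × ℝ) : ℝ :=
  sSup {x | v.1 ≤ x ∧ Icc v.1 x ×ˢ ({v.2} : Set ℝ) ⊆ H.region}

/-- The `y`-coordinate, among the vertices of `P` with abscissa `x` lying on the same side
of the base line as `side`, of the one closest to the base line (i.e. the endpoint of the
vertical edge at `x` closer to the base line). -/
def nearY (x : ℝ) (side : ℝ) : ℝ :=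
  if side < 0 then sSup {y | y < 0 ∧ (x, y) ∈ H.verts}
  else sInf {y | 0 < y ∧ (x, y) ∈ H.verts}

/-- The left point `ℓ(v)` (double-histogram version): if the leftward ray from `v` hits the
left boundary then the hit point, otherwise the endpoint of the hit vertical edge closer to
the base line. -/
def lpt (v : ℝ × ℝ) : ℝ × ℝ :=
  if H.lhit v = H.xs 0 then (H.xs 0, v.2) else (H.lhit v, H.nearY (H.lhit v) v.2)

/-- The right point `r(v)` (double-histogram version). -/
def rpt (v : ℝ × ℝ) : ℝ × ℝ :=
  if H.rhit v = H.xs (Fin.last H.m) then (H.xs (Fin.last H.m), v.2)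
  else (H.rhit v, H.nearY (H.rhit v) v.2)

/-- The left base vertex (for a simple histogram, i.e. `n = 1`). -/
def baseL : ℝ × ℝ := (H.xs 0, H.h ⟨0, H.hn⟩)

/-- The right base vertex (for a simple histogram, i.e. `n = 1`). -/
def baseR : ℝ × ℝ := (H.xs (Fin.last H.m), H.h ⟨0, H.hn⟩)

/-- The left point `ℓ(v)` (simple-histogram version): if the leftward ray from `v` hits the
left boundary then the left base vertex, otherwise the endpoint of the hit vertical edge
closer to the base edge. -/
def lptS (v : ℝ × ℝ) : ℝ × ℝ :=
  if H.lhit v = H.xs 0 then H.baseL else (H.lhit v, H.nearY (H.lhit v) v.2)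

/-- The right point `r(v)` (simple-histogram version). -/
def rptS (v : ℝ × ℝ) : ℝ × ℝ :=
  if H.rhit v = H.xs (Fin.last H.m) then H.baseR
  else (H.rhit v, H.nearY (H.rhit v) v.2)

/-- The interval `[p, q]`: all vertices of `P` between `p` and `q`. -/
def ivl (p q : ℝ × ℝ) : Set (ℝ × ℝ) :=
  {u | u ∈ H.verts ∧ p.1 ≤ u.1 ∧ u.1 ≤ q.1}

/-- The interval `I(v) = [ℓ(v), r(v)]` of a vertex (double-histogram version). -/
def Iv (v : ℝ × ℝ) : Set (ℝ × ℝ) := H.ivl (H.lpt v) (H.rpt v)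

/-- The interval `I(v) = [ℓ(v), r(v)]` of a vertex (simple-histogram version). -/
def IvS (v : ℝ × ℝ) : Set (ℝ × ℝ) := H.ivl (H.lptS v) (H.rptS v)

/-- The corresponding vertex `cv(v)`: the unique other vertex sharing a horizontal edge
(equivalently, by general position, the `y`-coordinate) with `v`. -/
def cv (v : ℝ × ℝ) : ℝ × ℝ :=
  (sSup {x | (x, v.2) ∈ H.verts ∧ x ≠ v.1}, v.2)

/-- `v` is a left vertex: the left endpoint of its horizontal edge. -/
def IsLeftVert (v : ℝ × ℝ) : Prop :=
  (∃ i : Fin H.m, v = (H.xs i.castSucc, H.d i)) ∨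
    ∃ j : Fin H.n, v = (H.ys j.castSucc, H.h j)

/-- `v` is a right vertex: the right endpoint of its horizontal edge. -/
def IsRightVert (v : ℝ × ℝ) : Prop :=
  (∃ i : Fin H.m, v = (H.xs i.succ, H.d i)) ∨
    ∃ j : Fin H.n, v = (H.ys j.succ, H.h j)

/-- `v` is an `ℓ`-reflex vertex (a left vertex with interior angle `3π/2`). -/
def IsLReflex (v : ℝ × ℝ) : Prop :=
  (∃ i : Fin H.m, ∃ _ : 0 < (i : ℕ),
      v = (H.xs i.castSucc, H.d i) ∧
        H.d ⟨(i : ℕ) - 1, lt_of_le_of_lt (Nat.sub_le _ _) i.isLt⟩ < H.d i) ∨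
    ∃ j : Fin H.n, ∃ _ : 0 < (j : ℕ),
      v = (H.ys j.castSucc, H.h j) ∧
        H.h j < H.h ⟨(j : ℕ) - 1, lt_of_le_of_lt (Nat.sub_le _ _) j.isLt⟩

/-- `v` is an `r`-reflex vertex (a right vertex with interior angle `3π/2`). -/
def IsRReflex (v : ℝ × ℝ) : Prop :=
  (∃ i : Fin H.m, ∃ hi : (i : ℕ) + 1 < H.m,
      v = (H.xs i.succ, H.d i) ∧ H.d ⟨(i : ℕ) + 1, hi⟩ < H.d i) ∨
    ∃ j : Fin H.n, ∃ hj : (j : ℕ) + 1 < H.n,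
      v = (H.ys j.succ, H.h j) ∧ H.h j < H.h ⟨(j : ℕ) + 1, hj⟩

/-- `v` is a reflex vertex. -/
def IsReflex (v : ℝ × ℝ) : Prop := H.IsLReflex v ∨ H.IsRReflex v

/-- The near dominator `nd(s,t)`: for `t` strictly right of `s`, the rightmost vertex of
`N(s)` to the left of `t`, ties broken towards the base line (symmetric otherwise). -/
def nd (s t : ℝ × ℝ) : ℝ × ℝ :=
  if s.1 < t.1 then
    let nx := sSup {x | (∃ y, (x, y) ∈ H.Nbr s) ∧ x ≤ t.1}
    (nx, closestToBase {y | (nx, y) ∈ H.Nbr s})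
  else
    let nx := sInf {x | (∃ y, (x, y) ∈ H.Nbr s) ∧ t.1 ≤ x}
    (nx, closestToBase {y | (nx, y) ∈ H.Nbr s})

/-- The far dominator `fd(s,t)`: for `t` strictly right of `s`, the leftmost vertex of
`N(s)` to the right of `t`, ties broken towards the base line; if there is no such vertex,
the point `r(s)` (symmetric otherwise). -/
def fd (s t : ℝ × ℝ) : ℝ × ℝ :=
  if s.1 < t.1 then
    if ∃ w ∈ H.Nbr s, t.1 ≤ w.1 then
      let nx := sInf {x | (∃ y, (x, y) ∈ H.Nbr s) ∧ t.1 ≤ x}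
      (nx, closestToBase {y | (nx, y) ∈ H.Nbr s})
    else H.rpt s
  else
    if ∃ w ∈ H.Nbr s, w.1 ≤ t.1 then
      let nx := sSup {x | (∃ y, (x, y) ∈ H.Nbr s) ∧ x ≤ t.1}
      (nx, closestToBase {y | (nx, y) ∈ H.Nbr s})
    else H.lpt s

/-- The sequence `a^i(s)`: `a^0(s) = s`, and `a^i(s)` is the leftmost vertex of
`A^i(s) = {v ∈ N(s) : ℓ(v)_x < ℓ(a^{i-1}(s))_x}` (ties towards the base line),
or `a^{i-1}(s)` if `A^i(s)` is empty. -/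
def aSeq (s : ℝ × ℝ) : ℕ → ℝ × ℝ := fun k =>
  Nat.rec (motive := fun _ => ℝ × ℝ) s
    (fun _ prev =>
      let A : Set (ℝ × ℝ) := {v | v ∈ H.Nbr s ∧ (H.lpt v).1 < (H.lpt prev).1}
      if A = ∅ then prev
      else
        let ax := sInf {x | ∃ y, (x, y) ∈ A}
        (ax, closestToBase {y | (ax, y) ∈ A}))
    k

/-- The sequence `b^i(s)`: `b^0(s) = s`, and `b^i(s)` is the rightmost vertex of
`B^i(s) = {v ∈ N(s) : r(v)_x > r(b^{i-1}(s))_x}` (ties towards the base line),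
or `b^{i-1}(s)` if `B^i(s)` is empty. -/
def bSeq (s : ℝ × ℝ) : ℕ → ℝ × ℝ := fun k =>
  Nat.rec (motive := fun _ => ℝ × ℝ) s
    (fun _ prev =>
      let B : Set (ℝ × ℝ) := {v | v ∈ H.Nbr s ∧ (H.rpt prev).1 < (H.rpt v).1}
      if B = ∅ then prev
      else
        let bx := sSup {x | ∃ y, (x, y) ∈ B}
        (bx, closestToBase {y | (bx, y) ∈ B}))
    k

/-- The pair of the `k`-th bottom dominator `bd^k(s)` and `k`-th top dominator `td^k(s)`:
`bd^0(s) = td^0(s) = s`; for `k > 0`, with `I^k(s) = I(bd^{k-1}(s)) ∪ I(td^{k-1}(s))`,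
`bd^k(s)` is the leftmost vertex of `I^k(s)⁻` minimizing the distance to the base line,
and `td^k(s)` the leftmost vertex of `I^k(s)⁺` minimizing the distance to the base line;
if one of the two sets is empty, the corresponding dominator equals the other one. -/
def bdtd (s : ℝ × ℝ) : ℕ → (ℝ × ℝ) × (ℝ × ℝ) := fun k =>
  Nat.rec (motive := fun _ => (ℝ × ℝ) × (ℝ × ℝ)) (s, s)
    (fun _ p =>
      let J : Set (ℝ × ℝ) := H.Iv p.1 ∪ H.Iv p.2
      let Jm : Set (ℝ × ℝ) := {v | v ∈ J ∧ v.2 < 0}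
      let Jp : Set (ℝ × ℝ) := {v | v ∈ J ∧ 0 < v.2}
      if Jm = ∅ then (leftmostLowest Jp, leftmostLowest Jp)
      else if Jp = ∅ then (leftmostLowest Jm, leftmostLowest Jm)
      else (leftmostLowest Jm, leftmostLowest Jp))
    k

/-- The `k`-th interval `I^k(s)`: `I^0(s) = {s}` and
`I^{k+1}(s) = I(bd^k(s)) ∪ I(td^k(s))`. -/
def Ipow (s : ℝ × ℝ) : ℕ → Set (ℝ × ℝ) := fun k =>
  Nat.rec (motive := fun _ => Set (ℝ × ℝ)) {s}
    (fun k _ => H.Iv (H.bdtd s k).1 ∪ H.Iv (H.bdtd s k).2) k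

/-- `w` lies on a shortest path from `s` to `t` in the visibility graph. -/
def OnShortestPath (s t w : ↥H.verts) : Prop :=
  ∃ p : H.visGraph.Walk s t, p.length = H.visGraph.dist s t ∧ w ∈ p.support

end DoubleHistogram

/-- A routing scheme for a graph `G`: every vertex carries a binary label and a binary
routing table, and the routing function maps (link table of the current vertex, routing
table of the current vertex, label of the target, current header) to the next vertex
together with the new header. -/
structure RoutingScheme {V : Type} (G : SimpleGraph V) where
  lab : V → List Bool
  tab : V → List Bool
  route : Set (List Bool) → List Bool → List Bool → List Bool → V × List Bool

namespace RoutingScheme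

variable {V : Type} {G : SimpleGraph V} (R : RoutingScheme G)

/-- One routing step at vertex `p` with header `h`, towards the target `t`: the routing
function is applied to the link table of `p` (the labels of its closed neighborhood),
the routing table of `p`, the label of `t` and the header `h`. -/
def step (t p : V) (h : List Bool) : V × List Bool :=
  R.route (R.lab '' {w | w = p ∨ G.Adj p w}) (R.tab p) (R.lab t) h

/-- The routing sequence from `s` towards `t`, starting with the empty header. -/
def seq (s t : V) : ℕ → V × List Bool := fun k =>
  Nat.rec (motive := fun _ => V × List Bool) (s, ([] : List Bool))
    (fun _ q => R.step t q.1 q.2) k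

end RoutingScheme

/-!
Every column of `P` stands on the base line. So if `w` is a vertex over an interval `X` of
abscissae that is closest to the base line among the vertices over `X` on its side, every
column over `X` on that side has a vertex over `X` (as `X` contains the abscissa of `w`), hence
reaches at least as far as `w`: the horizontal chord through `w` spans `X`, and so contains the
chord of every vertex over `X` on the same side. Thus `I(s) ⊆ I(bd s) ∩ I(td s)`, and
`I(bd s) ∪ I(td s)` is again the set of vertices over an interval. On either side, its
dominator `w` is the dominator of `I(bd s)` or of `I(td s)`, and `I(w)` contains the interval
of the other one's dominator; this gives `I³(s) = I²(bd s) ∪ I²(td s)`. If `I(s)` has no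
vertex on one side of the base line, then `bd s = td s` and the recursion restarts from it.
-/

section Order

variable {α : Type*}

theorem Fin.exists_mem_Icc_castSucc_succ [LinearOrder α] {k : ℕ} (hk : 0 < k)
    (f : Fin (k + 1) → α) {a : α} (h₀ : f 0 ≤ a) (h₁ : a ≤ f (Fin.last k)) :
    ∃ i : Fin k, a ∈ Icc (f i.castSucc) (f i.succ) := by
  by_contra! hno
  have hle : ∀ i, f i ≤ a := by
    intro i
    induction i using Fin.induction with
    | zero => exact h₀
    | succ i ih => exact (not_le.1 fun h => hno i ⟨ih, h⟩).le
  obtain ⟨j, rfl⟩ : ∃ j, k = j + 1 := ⟨k - 1, by omega⟩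
  exact hno (Fin.last j) ⟨hle _, by simpa using h₁⟩

theorem StrictMono.exists_mem_Icc_endpoint_mem [LinearOrder α] {k : ℕ} (hk : 0 < k)
    {f : Fin (k + 1) → α} (hf : StrictMono f) {X : Set α} (hX : X.OrdConnected)
    {c : Fin (k + 1)} (hc : f c ∈ X) {a : α} (ha : a ∈ X) (h₀ : f 0 ≤ a)
    (h₁ : a ≤ f (Fin.last k)) :
    ∃ i : Fin k, a ∈ Icc (f i.castSucc) (f i.succ) ∧ (f i.castSucc ∈ X ∨ f i.succ ∈ X) := by
  obtain ⟨i, hi⟩ := Fin.exists_mem_Icc_castSucc_succ hk f h₀ h₁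
  refine ⟨i, hi, ?_⟩
  rcases le_or_gt c i.castSucc with hci | hic
  · exact Or.inl (hX.out hc ha ⟨hf.monotone hci, hi.1⟩)
  · exact Or.inr (hX.out ha hc ⟨hi.2, hf.monotone (Fin.castSucc_lt_iff_succ_le.1 hic)⟩)

variable [ConditionallyCompleteLinearOrder α] [TopologicalSpace α] [OrderTopology α]
  {C : Set α} {b : α}

theorem IsClosed.isLeast_csInf_Icc_subset (hC : IsClosed C) (hCb : BddBelow C) (hb : b ∈ C) :
    IsLeast {x | x ≤ b ∧ Icc x b ⊆ C} (sInf {x | x ≤ b ∧ Icc x b ⊆ C}) := by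
  set S := {x | x ≤ b ∧ Icc x b ⊆ C}
  have hSC : S ⊆ C := fun x hx => hx.2 ⟨le_rfl, hx.1⟩
  have hbS : b ∈ S := ⟨le_rfl, by simpa using hb⟩
  have hS : BddBelow S := hCb.mono hSC
  refine ⟨⟨csInf_le hS hbS, fun c hc => ?_⟩, fun x hx => csInf_le hS hx⟩
  rcases hc.1.eq_or_lt with rfl | hlt
  · exact closure_minimal hSC hC (csInf_mem_closure ⟨b, hbS⟩ hS)
  · obtain ⟨x, hx, hxc⟩ := exists_lt_of_csInf_lt ⟨b, hbS⟩ hlt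
    exact hx.2 ⟨hxc.le, hc.2⟩

theorem IsClosed.isGreatest_csSup_Icc_subset (hC : IsClosed C) (hCb : BddAbove C) (hb : b ∈ C) :
    IsGreatest {x | b ≤ x ∧ Icc b x ⊆ C} (sSup {x | b ≤ x ∧ Icc b x ⊆ C}) := by
  set S := {x | b ≤ x ∧ Icc b x ⊆ C}
  have hSC : S ⊆ C := fun x hx => hx.2 ⟨hx.1, le_rfl⟩
  have hbS : b ∈ S := ⟨le_rfl, by simpa using hb⟩
  have hS : BddAbove S := hCb.mono hSC
  refine ⟨⟨le_csSup hS hbS, fun c hc => ?_⟩, fun x hx => le_csSup hS hx⟩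
  rcases hc.2.eq_or_lt with rfl | hlt
  · exact closure_minimal hSC hC (csSup_mem_closure ⟨b, hbS⟩ hS)
  · obtain ⟨x, hx, hcx⟩ := exists_lt_of_lt_csSup ⟨b, hbS⟩ hlt
    exact hx.2 ⟨hc.1, hcx.le⟩

end Order

theorem leftmostLowest_spec {S : Set (ℝ × ℝ)} (hfin : S.Finite) (hne : S.Nonempty)
    (hS : ∀ p ∈ S, ∀ q ∈ S, |p.2| = |q.2| → p.2 = q.2) :
    leftmostLowest S ∈ S ∧ (∀ q ∈ S, |(leftmostLowest S).2| ≤ |q.2|) ∧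
      ∀ q ∈ S, (∀ r ∈ S, |q.2| ≤ |r.2|) → (leftmostLowest S).1 ≤ q.1 := by
  set X := {x | ∃ y, (x, y) ∈ S ∧ ∀ q ∈ S, |y| ≤ |q.2|}
  obtain ⟨p, hpS, hp⟩ := Set.exists_min_image S (fun q => |q.2|) hfin hne
  have hX : X.Finite := (hfin.image Prod.fst).subset fun x ⟨y, hy, _⟩ => ⟨(x, y), hy, rfl⟩
  obtain ⟨y₀, hy₀S, hy₀⟩ : sInf X ∈ X := Set.Nonempty.csInf_mem ⟨p.1, p.2, hpS, hp⟩ hX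
  -- by `hS`, `y₀` is the only ordinate over `sInf X` of minimal distance to the base line
  have hy : closestToBase {y | (sInf X, y) ∈ S} = y₀ := by
    have : {y | (sInf X, y) ∈ S ∧ ∀ y', (sInf X, y') ∈ S → |y| ≤ |y'|} = {y₀} := by
      ext y
      refine ⟨fun ⟨hyS, hymin⟩ => ?_, fun h => h ▸ ⟨hy₀S, fun y' hy' => hy₀ _ hy'⟩⟩
      exact hS _ hyS _ hy₀S ((hymin y₀ hy₀S).antisymm (hy₀ _ hyS))
    simp only [closestToBase, Set.mem_ofPred_eq, this, csSup_singleton]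
  have hL : leftmostLowest S = (sInf X, y₀) := Prod.ext rfl hy
  rw [hL]
  exact ⟨hy₀S, hy₀, fun q hq hqmin => csInf_le hX.bddBelow ⟨q.2, hq, hqmin⟩⟩

theorem leftmostLowest_eq_of_subset {S T : Set (ℝ × ℝ)} (hST : S ⊆ T) (hT : T.Finite)
    (hne : S.Nonempty) (hTy : ∀ p ∈ T, ∀ q ∈ T, |p.2| = |q.2| → p.2 = q.2)
    (hmem : leftmostLowest T ∈ S) : leftmostLowest S = leftmostLowest T := by
  obtain ⟨hS₁, hS₂, hS₃⟩ := leftmostLowest_spec (hT.subset hST) hne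
    fun p hp q hq => hTy p (hST hp) q (hST hq)
  obtain ⟨-, hT₂, hT₃⟩ := leftmostLowest_spec hT (hne.mono hST) hTy
  have habs := (hS₂ _ hmem).antisymm (hT₂ _ (hST hS₁))
  refine Prod.ext ((hS₃ _ hmem fun r hr => hT₂ r (hST hr)).antisymm
    (hT₃ _ (hST hS₁) fun r hr => habs ▸ hT₂ r hr)) (hTy _ (hST hS₁) _ (hST hmem) habs)

/-- `σ = -1` selects the points of `J` below the base line, `σ = 1` those above it. -/
def onSide (J : Set (ℝ × ℝ)) (σ : ℝ) : Set (ℝ × ℝ) := {v | v ∈ J ∧ 0 < v.2 * σ}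

section onSide

variable {J K : Set (ℝ × ℝ)} {σ : ℝ}

theorem onSide_neg_one : onSide J (-1) = {v | v ∈ J ∧ v.2 < 0} := by
  ext v; simp [onSide]

theorem onSide_one : onSide J 1 = {v | v ∈ J ∧ 0 < v.2} := by
  ext v; simp [onSide]

theorem onSide_mono (h : J ⊆ K) : onSide J σ ⊆ onSide K σ := fun _ hv => ⟨h hv.1, hv.2⟩

theorem pos_mul_of_pos_mul_of_pos_mul {a b c : ℝ} (hab : 0 < a * b) (hbc : 0 < b * c) :
    0 < a * c :=
  pos_of_mul_pos_left (b := b ^ 2) (by linarith [mul_pos hab hbc]) (sq_nonneg b)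

theorem mul_pos_of_mem_onSide {p q : ℝ × ℝ} (hp : p ∈ onSide J σ) (hq : q ∈ onSide K σ) :
    0 < p.2 * q.2 :=
  pos_mul_of_pos_mul_of_pos_mul hp.2 (by linarith [hq.2, mul_comm q.2 σ])

theorem snd_eq_of_abs_eq {p q : ℝ × ℝ} (hp : p ∈ onSide J σ) (hq : q ∈ onSide J σ)
    (h : |p.2| = |q.2|) : p.2 = q.2 := by
  rcases abs_eq_abs.1 h with h | h
  · exact h
  · nlinarith [mul_pos_of_mem_onSide hp hq]

theorem snd_mem_uIcc_of_abs_le {p q : ℝ × ℝ} (hp : p ∈ onSide J σ) (hq : q ∈ onSide K σ)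
    (h : |p.2| ≤ |q.2|) : p.2 ∈ uIcc 0 q.2 := by
  have hpq := mul_pos_of_mem_onSide hp hq
  rw [mem_uIcc]
  rcases abs_cases p.2 with ⟨h₁, h₂⟩ | ⟨h₁, h₂⟩ <;> rcases abs_cases q.2 with ⟨h₃, h₄⟩ | ⟨h₃, h₄⟩
  · exact Or.inl ⟨h₂, by linarith⟩
  · nlinarith
  · nlinarith
  · exact Or.inr ⟨by linarith, h₂.le⟩

theorem leftmostLowest_onSide_spec (hJ : J.Finite) (hne : (onSide J σ).Nonempty) :
    leftmostLowest (onSide J σ) ∈ onSide J σ ∧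
      ∀ q ∈ onSide J σ, |(leftmostLowest (onSide J σ)).2| ≤ |q.2| :=
  (leftmostLowest_spec (hJ.subset fun _ hv => hv.1) hne fun _ hp _ hq =>
    snd_eq_of_abs_eq hp hq).imp_right And.left

end onSide

namespace DoubleHistogram

variable (H : DoubleHistogram) {X : Set ℝ} {σ : ℝ} {s : ℝ × ℝ} {k : ℕ}

theorem verts_finite : H.verts.Finite :=
  .union (finite_iUnion fun _ => by simp) (finite_iUnion fun _ => by simp)

theorem isClosed_region : IsClosed H.region :=
  .union (isClosed_iUnion_of_finite fun _ => isClosed_Icc.prod isClosed_Icc)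
    (isClosed_iUnion_of_finite fun _ => isClosed_Icc.prod isClosed_Icc)

theorem mem_region_iff {p : ℝ × ℝ} : p ∈ H.region ↔
    (∃ i : Fin H.m, p.1 ∈ Icc (H.xs i.castSucc) (H.xs i.succ) ∧ p.2 ∈ Icc (H.d i) 0) ∨
      ∃ j : Fin H.n, p.1 ∈ Icc (H.ys j.castSucc) (H.ys j.succ) ∧ p.2 ∈ Icc 0 (H.h j) := by
  simp only [region, mem_union, mem_iUnion, mem_prod]

theorem mem_verts_iff {v : ℝ × ℝ} : v ∈ H.verts ↔
    (∃ i : Fin H.m, v = (H.xs i.castSucc, H.d i) ∨ v = (H.xs i.succ, H.d i)) ∨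
      ∃ j : Fin H.n, v = (H.ys j.castSucc, H.h j) ∨ v = (H.ys j.succ, H.h j) := by
  simp [verts]

theorem verts_subset_region : H.verts ⊆ H.region := by
  intro v hv
  have hx (i : Fin H.m) := H.xs_mono (Fin.castSucc_lt_succ (i := i))
  have hy (j : Fin H.n) := H.ys_mono (Fin.castSucc_lt_succ (i := j))
  rw [mem_region_iff]
  rcases H.mem_verts_iff.1 hv with ⟨i, rfl | rfl⟩ | ⟨j, rfl | rfl⟩
  · exact .inl ⟨i, ⟨le_rfl, (hx i).le⟩, le_rfl, (H.d_neg i).le⟩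
  · exact .inl ⟨i, ⟨(hx i).le, le_rfl⟩, le_rfl, (H.d_neg i).le⟩
  · exact .inr ⟨j, ⟨le_rfl, (hy j).le⟩, (H.h_pos j).le, le_rfl⟩
  · exact .inr ⟨j, ⟨(hy j).le, le_rfl⟩, (H.h_pos j).le, le_rfl⟩

def row (y : ℝ) : Set ℝ := (fun x => (x, y)) ⁻¹' H.region

theorem isClosed_row (y : ℝ) : IsClosed (H.row y) :=
  H.isClosed_region.preimage (by fun_prop)

theorem row_subset_Icc (y : ℝ) : H.row y ⊆ Icc (H.xs 0) (H.xs (Fin.last H.m)) := by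
  intro x hx
  rcases H.mem_region_iff.1 hx with ⟨i, hi, -⟩ | ⟨j, hj, -⟩
  · exact ⟨(H.xs_mono.monotone (Fin.zero_le _)).trans hi.1,
      hi.2.trans (H.xs_mono.monotone (Fin.le_last _))⟩
  · rw [← H.left_eq, ← H.right_eq]
    exact ⟨(H.ys_mono.monotone (Fin.zero_le _)).trans hj.1,
      hj.2.trans (H.ys_mono.monotone (Fin.le_last _))⟩

/-- Every column of `P` contains the base line, so rows shrink away from it. -/
theorem row_subset_row {y y' : ℝ} (hy : y' ∈ uIcc 0 y) : H.row y ⊆ H.row y' := by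
  intro x hx
  rcases H.mem_region_iff.1 hx with ⟨i, hi, hyi⟩ | ⟨j, hj, hyj⟩
  · exact H.mem_region_iff.2 (.inl ⟨i, hi, uIcc_subset_Icc ⟨(H.d_neg i).le, le_rfl⟩ hyi hy⟩)
  · exact H.mem_region_iff.2 (.inr ⟨j, hj, uIcc_subset_Icc ⟨le_rfl, (H.h_pos j).le⟩ hyj hy⟩)

theorem lhit_eq (v : ℝ × ℝ) : H.lhit v = sInf {x | x ≤ v.1 ∧ Icc x v.1 ⊆ H.row v.2} := by
  simp only [lhit, prod_singleton, image_subset_iff, row]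

theorem rhit_eq (v : ℝ × ℝ) : H.rhit v = sSup {x | v.1 ≤ x ∧ Icc v.1 x ⊆ H.row v.2} := by
  simp only [rhit, prod_singleton, image_subset_iff, row]

theorem isLeast_lhit {v : ℝ × ℝ} (hv : v ∈ H.region) :
    IsLeast {x | x ≤ v.1 ∧ Icc x v.1 ⊆ H.row v.2} (H.lhit v) :=
  H.lhit_eq v ▸ (H.isClosed_row v.2).isLeast_csInf_Icc_subset
    (bddBelow_Icc.mono (H.row_subset_Icc _)) hv

theorem isGreatest_rhit {v : ℝ × ℝ} (hv : v ∈ H.region) :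
    IsGreatest {x | v.1 ≤ x ∧ Icc v.1 x ⊆ H.row v.2} (H.rhit v) :=
  H.rhit_eq v ▸ (H.isClosed_row v.2).isGreatest_csSup_Icc_subset
    (bddAbove_Icc.mono (H.row_subset_Icc _)) hv

def chord (v : ℝ × ℝ) : Set ℝ := Icc (H.lhit v) (H.rhit v)

theorem mem_chord {v : ℝ × ℝ} (hv : v ∈ H.region) : v.1 ∈ H.chord v :=
  ⟨(H.isLeast_lhit hv).1.1, (H.isGreatest_rhit hv).1.1⟩

theorem chord_subset_row {v : ℝ × ℝ} (hv : v ∈ H.region) : H.chord v ⊆ H.row v.2 := by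
  rw [chord, ← Icc_union_Icc_eq_Icc (H.mem_chord hv).1 (H.mem_chord hv).2]
  exact union_subset (H.isLeast_lhit hv).1.2 (H.isGreatest_rhit hv).1.2

theorem subset_chord {v : ℝ × ℝ} {X : Set ℝ} (hX : X.OrdConnected) (hvX : v.1 ∈ X)
    (hXv : X ⊆ H.row v.2) : X ⊆ H.chord v := by
  have hv : v ∈ H.region := hXv hvX
  intro x hx
  rcases le_total x v.1 with hxv | hvx
  · exact ⟨(H.isLeast_lhit hv).2 ⟨hxv, (hX.out hx hvX).trans hXv⟩,
      hxv.trans (H.mem_chord hv).2⟩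
  · exact ⟨(H.mem_chord hv).1.trans hvx,
      (H.isGreatest_rhit hv).2 ⟨hvx, (hX.out hvX hx).trans hXv⟩⟩

theorem chord_subset_Icc {v : ℝ × ℝ} (hv : v ∈ H.region) :
    H.chord v ⊆ Icc (H.xs 0) (H.xs (Fin.last H.m)) :=
  (H.chord_subset_row hv).trans (H.row_subset_Icc _)

theorem ordConnected_chord_union {p q : ℝ × ℝ} {x : ℝ} (hp : x ∈ H.chord p)
    (hq : x ∈ H.chord q) : (H.chord p ∪ H.chord q).OrdConnected := by
  rw [chord, chord, Icc_union_Icc' (hq.1.trans hp.2) (hp.1.trans hq.2)]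
  exact ordConnected_Icc

theorem chord_subset_chord {p q : ℝ × ℝ} (hp : p ∈ H.region) (hq : q ∈ H.region)
    (hpq : p.2 ∈ uIcc 0 q.2) (hqp : q.1 ∈ H.chord p) : H.chord q ⊆ H.chord p :=
  subset_union_right.trans <| H.subset_chord (H.ordConnected_chord_union hqp (H.mem_chord hq))
    (.inl (H.mem_chord hp))
    (union_subset (H.chord_subset_row hp) ((H.chord_subset_row hq).trans (H.row_subset_row hpq)))

theorem subset_row_of_forall_d_le (hX : X.OrdConnected)
    (hXP : X ⊆ Icc (H.xs 0) (H.xs (Fin.last H.m)))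
    {k : Fin (H.m + 1)} (hk : H.xs k ∈ X) {y : ℝ} (hy : y ≤ 0)
    (hd : ∀ i : Fin H.m, H.xs i.castSucc ∈ X ∨ H.xs i.succ ∈ X → H.d i ≤ y) :
    X ⊆ H.row y := by
  intro a ha
  obtain ⟨i, hai, hi⟩ :=
    H.xs_mono.exists_mem_Icc_endpoint_mem H.hm hX hk ha (hXP ha).1 (hXP ha).2
  exact H.mem_region_iff.2 (.inl ⟨i, hai, hd i hi, hy⟩)

theorem subset_row_of_forall_le_h (hX : X.OrdConnected)
    (hXP : X ⊆ Icc (H.xs 0) (H.xs (Fin.last H.m)))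
    {k : Fin (H.n + 1)} (hk : H.ys k ∈ X) {y : ℝ} (hy : 0 ≤ y)
    (hh : ∀ j : Fin H.n, H.ys j.castSucc ∈ X ∨ H.ys j.succ ∈ X → y ≤ H.h j) :
    X ⊆ H.row y := by
  intro a ha
  obtain ⟨j, haj, hj⟩ := H.ys_mono.exists_mem_Icc_endpoint_mem H.hn hX hk ha
    (H.left_eq ▸ (hXP ha).1) (H.right_eq ▸ (hXP ha).2)
  exact H.mem_region_iff.2 (.inr ⟨j, haj, hy, hh j hj⟩)

theorem subset_row_of_forall_abs_le (hX : X.OrdConnected)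
    (hXP : X ⊆ Icc (H.xs 0) (H.xs (Fin.last H.m))) {w : ℝ × ℝ} (hw : w ∈ H.verts)
    (hwX : w.1 ∈ X) (hmin : ∀ u ∈ H.verts, u.1 ∈ X → 0 < u.2 * w.2 → |w.2| ≤ |u.2|) :
    X ⊆ H.row w.2 := by
  have hd (i : Fin H.m) (hw0 : w.2 < 0) (hi : H.xs i.castSucc ∈ X ∨ H.xs i.succ ∈ X) :
      H.d i ≤ w.2 := by
    obtain ⟨x, hxX, hx⟩ : ∃ x ∈ X, (x, H.d i) ∈ H.verts := hi.elim
      (fun h => ⟨_, h, H.mem_verts_iff.2 (.inl ⟨i, .inl rfl⟩)⟩)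
      (fun h => ⟨_, h, H.mem_verts_iff.2 (.inl ⟨i, .inr rfl⟩)⟩)
    have := hmin _ hx hxX (mul_pos_of_neg_of_neg (H.d_neg i) hw0)
    rw [abs_of_neg hw0, abs_of_neg (H.d_neg i)] at this
    linarith
  have hh (j : Fin H.n) (hw0 : 0 < w.2) (hj : H.ys j.castSucc ∈ X ∨ H.ys j.succ ∈ X) :
      w.2 ≤ H.h j := by
    obtain ⟨x, hxX, hx⟩ : ∃ x ∈ X, (x, H.h j) ∈ H.verts := hj.elim
      (fun h => ⟨_, h, H.mem_verts_iff.2 (.inr ⟨j, .inl rfl⟩)⟩)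
      (fun h => ⟨_, h, H.mem_verts_iff.2 (.inr ⟨j, .inr rfl⟩)⟩)
    have := hmin _ hx hxX (mul_pos (H.h_pos j) hw0)
    rwa [abs_of_pos hw0, abs_of_pos (H.h_pos j)] at this
  rcases H.mem_verts_iff.1 hw with ⟨i, rfl | rfl⟩ | ⟨j, rfl | rfl⟩
  · exact H.subset_row_of_forall_d_le hX hXP hwX (H.d_neg i).le fun i' => hd i' (H.d_neg i)
  · exact H.subset_row_of_forall_d_le hX hXP hwX (H.d_neg i).le fun i' => hd i' (H.d_neg i)
  · exact H.subset_row_of_forall_le_h hX hXP hwX (H.h_pos j).le fun j' => hh j' (H.h_pos j)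
  · exact H.subset_row_of_forall_le_h hX hXP hwX (H.h_pos j).le fun j' => hh j' (H.h_pos j)

def vertsOver (X : Set ℝ) : Set (ℝ × ℝ) := {u | u ∈ H.verts ∧ u.1 ∈ X}

theorem vertsOver_subset : H.vertsOver X ⊆ H.verts := fun _ hu => hu.1

theorem vertsOver_mono {Y : Set ℝ} (h : X ⊆ Y) : H.vertsOver X ⊆ H.vertsOver Y :=
  fun _ hu => ⟨hu.1, h hu.2⟩

theorem vertsOver_union (Y : Set ℝ) : H.vertsOver X ∪ H.vertsOver Y = H.vertsOver (X ∪ Y) := by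
  ext u; simp only [vertsOver, mem_union, mem_ofPred_eq]; tauto

theorem Iv_eq_vertsOver (v : ℝ × ℝ) : H.Iv v = H.vertsOver (H.chord v) := by
  have hl : (H.lpt v).1 = H.lhit v := by unfold lpt; split_ifs with h <;> simp [h]
  have hr : (H.rpt v).1 = H.rhit v := by unfold rpt; split_ifs with h <;> simp [h]
  simp only [Iv, ivl, vertsOver, chord, mem_Icc, hl, hr]

theorem subset_chord_leftmostLowest (hX : X.OrdConnected)
    (hXP : X ⊆ Icc (H.xs 0) (H.xs (Fin.last H.m))) (hne : (onSide (H.vertsOver X) σ).Nonempty) :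
    X ⊆ H.chord (leftmostLowest (onSide (H.vertsOver X) σ)) := by
  obtain ⟨hw, hmin⟩ := leftmostLowest_onSide_spec (H.verts_finite.subset H.vertsOver_subset) hne
  refine H.subset_chord hX hw.1.2 (H.subset_row_of_forall_abs_le hX hXP hw.1.1 hw.1.2 ?_)
  exact fun u hu huX huw => hmin u ⟨⟨hu, huX⟩, pos_mul_of_pos_mul_of_pos_mul huw hw.2⟩

theorem Iv_subset_Iv_leftmostLowest (hX : X.OrdConnected)
    (hXP : X ⊆ Icc (H.xs 0) (H.xs (Fin.last H.m))) {u : ℝ × ℝ}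
    (hu : u ∈ onSide (H.vertsOver X) σ) :
    H.Iv u ⊆ H.Iv (leftmostLowest (onSide (H.vertsOver X) σ)) := by
  obtain ⟨hw, hmin⟩ := leftmostLowest_onSide_spec (H.verts_finite.subset H.vertsOver_subset) ⟨u, hu⟩
  rw [Iv_eq_vertsOver, Iv_eq_vertsOver]
  exact H.vertsOver_mono <| H.chord_subset_chord (H.verts_subset_region hw.1.1)
    (H.verts_subset_region hu.1.1) (snd_mem_uIcc_of_abs_le hw hu (hmin u hu))
    (H.subset_chord_leftmostLowest hX hXP ⟨u, hu⟩ hu.1.2)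

theorem Iv_leftmostLowest_onSide_union (hX : X.OrdConnected)
    (hXP : X ⊆ Icc (H.xs 0) (H.xs (Fin.last H.m))) {K₁ K₂ : Set (ℝ × ℝ)}
    (hK : K₁ ∪ K₂ = H.vertsOver X) (h₁ : (onSide K₁ σ).Nonempty)
    (h₂ : (onSide K₂ σ).Nonempty) :
    H.Iv (leftmostLowest (onSide (K₁ ∪ K₂) σ)) =
      H.Iv (leftmostLowest (onSide K₁ σ)) ∪ H.Iv (leftmostLowest (onSide K₂ σ)) := by
  have hfin : (H.vertsOver X).Finite := H.verts_finite.subset H.vertsOver_subset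
  have hsub {K} (hKX : K ⊆ H.vertsOver X) (hKne : (onSide K σ).Nonempty) :
      H.Iv (leftmostLowest (onSide K σ)) ⊆ H.Iv (leftmostLowest (onSide (H.vertsOver X) σ)) :=
    H.Iv_subset_Iv_leftmostLowest hX hXP
      (onSide_mono hKX (leftmostLowest_onSide_spec (hfin.subset hKX) hKne).1)
  have heq {K} (hKX : K ⊆ H.vertsOver X) (hKne : (onSide K σ).Nonempty)
      (hwK : leftmostLowest (onSide (H.vertsOver X) σ) ∈ K) :
      leftmostLowest (onSide K σ) = leftmostLowest (onSide (H.vertsOver X) σ) := by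
    have hw := (leftmostLowest_onSide_spec hfin (h₁.mono (onSide_mono (hK ▸ subset_union_left)))).1
    exact leftmostLowest_eq_of_subset (onSide_mono hKX) (hfin.subset fun _ hv => hv.1) hKne
      (fun _ hp _ hq => snd_eq_of_abs_eq hp hq) ⟨hwK, hw.2⟩
  have hK₁ : K₁ ⊆ H.vertsOver X := hK ▸ subset_union_left
  have hK₂ : K₂ ⊆ H.vertsOver X := hK ▸ subset_union_right
  rw [hK]
  refine (union_subset (hsub hK₁ h₁) (hsub hK₂ h₂)).antisymm' ?_
  have hw := (leftmostLowest_onSide_spec hfin (h₁.mono (onSide_mono hK₁))).1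
  obtain h | h : leftmostLowest (onSide (H.vertsOver X) σ) ∈ K₁ ∪ K₂ := hK.symm ▸ hw.1
  · exact heq hK₁ h₁ h ▸ subset_union_left
  · exact heq hK₂ h₂ h ▸ subset_union_right

theorem Ipow_succ (s : ℝ × ℝ) (k : ℕ) :
    H.Ipow s (k + 1) = H.Iv (H.bdtd s k).1 ∪ H.Iv (H.bdtd s k).2 := rfl

theorem bdtd_succ_of_nonempty (hm : (onSide (H.Ipow s (k + 1)) (-1)).Nonempty)
    (hp : (onSide (H.Ipow s (k + 1)) 1).Nonempty) :
    H.bdtd s (k + 1) = (leftmostLowest (onSide (H.Ipow s (k + 1)) (-1)),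
      leftmostLowest (onSide (H.Ipow s (k + 1)) 1)) := by
  rw [onSide_neg_one] at hm ⊢
  rw [onSide_one] at hp ⊢
  exact (if_neg hm.ne_empty).trans (if_neg hp.ne_empty)

theorem bdtd_succ_fst_eq_snd
    (h : ¬((onSide (H.Ipow s (k + 1)) (-1)).Nonempty ∧ (onSide (H.Ipow s (k + 1)) 1).Nonempty)) :
    (H.bdtd s (k + 1)).1 = (H.bdtd s (k + 1)).2 := by
  rw [onSide_neg_one, onSide_one, not_and_or, not_nonempty_iff_eq_empty,
    not_nonempty_iff_eq_empty] at h
  rcases h with hm | hp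
  · rw [show H.bdtd s (k + 1) = _ from if_pos hm]
  · by_cases hm : {v | v ∈ H.Ipow s (k + 1) ∧ v.2 < 0} = ∅
    · rw [show H.bdtd s (k + 1) = _ from if_pos hm]
    · rw [show H.bdtd s (k + 1) = _ from (if_neg hm).trans (if_pos hp)]

theorem bdtd_add_of_eq {b : ℝ × ℝ} (h : H.bdtd s k = (b, b)) (j : ℕ) :
    H.bdtd s (k + j) = H.bdtd b j := by
  induction j with
  | zero => exact h
  | succ j ih => simp only [bdtd, ← Nat.add_assoc] at ih ⊢; rw [ih]

theorem Ipow_add_of_eq {b : ℝ × ℝ} (h : H.bdtd s k = (b, b)) (j : ℕ) :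
    H.Ipow s (k + j + 1) = H.Ipow b (j + 1) := by
  rw [Ipow_succ, Ipow_succ, H.bdtd_add_of_eq h]

theorem Ipow_one (s : ℝ × ℝ) : H.Ipow s 1 = H.Iv s := union_self _

theorem finite_Iv (v : ℝ × ℝ) : (H.Iv v).Finite :=
  H.Iv_eq_vertsOver v ▸ H.verts_finite.subset H.vertsOver_subset

theorem mem_Iv_self (hs : s ∈ H.verts) : s ∈ H.Iv s :=
  H.Iv_eq_vertsOver s ▸ ⟨hs, H.mem_chord (H.verts_subset_region hs)⟩

theorem bdtd_one_of_nonempty (hm : (onSide (H.Iv s) (-1)).Nonempty)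
    (hp : (onSide (H.Iv s) 1).Nonempty) :
    H.bdtd s 1 = (leftmostLowest (onSide (H.Iv s) (-1)), leftmostLowest (onSide (H.Iv s) 1)) := by
  have := H.bdtd_succ_of_nonempty (s := s) (k := 0) (by rwa [zero_add, Ipow_one])
    (by rwa [zero_add, Ipow_one])
  rwa [zero_add, Ipow_one] at this

theorem Iv_subset_Iv_leftmostLowest_onSide_Iv (hs : s ∈ H.region)
    (hne : (onSide (H.Iv s) σ).Nonempty) :
    H.Iv s ⊆ H.Iv (leftmostLowest (onSide (H.Iv s) σ)) := by
  rw [Iv_eq_vertsOver] at hne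
  rw [Iv_eq_vertsOver, Iv_eq_vertsOver]
  exact H.vertsOver_mono
    (H.subset_chord_leftmostLowest ordConnected_Icc (H.chord_subset_Icc hs) hne)

theorem Ipow_three_of_nonempty (hs : s ∈ H.verts) (hm : (onSide (H.Iv s) (-1)).Nonempty)
    (hp : (onSide (H.Iv s) 1).Nonempty) :
    H.Ipow s 3 = H.Ipow (H.bdtd s 1).1 2 ∪ H.Ipow (H.bdtd s 1).2 2 := by
  set B := leftmostLowest (onSide (H.Iv s) (-1))
  set T := leftmostLowest (onSide (H.Iv s) 1)
  have hsR := H.verts_subset_region hs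
  have hsB : H.Iv s ⊆ H.Iv B := H.Iv_subset_Iv_leftmostLowest_onSide_Iv hsR hm
  have hsT : H.Iv s ⊆ H.Iv T := H.Iv_subset_Iv_leftmostLowest_onSide_Iv hsR hp
  have hR {v} (hv : v ∈ H.Iv s) : v ∈ H.region :=
    H.verts_subset_region (H.Iv_eq_vertsOver s ▸ hv).1
  have hBR := hR (leftmostLowest_onSide_spec (H.finite_Iv s) hm).1.1
  have hTR := hR (leftmostLowest_onSide_spec (H.finite_Iv s) hp).1.1
  have hK : H.Iv B ∪ H.Iv T = H.vertsOver (H.chord B ∪ H.chord T) := by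
    rw [Iv_eq_vertsOver, Iv_eq_vertsOver, vertsOver_union]
  have hX : (H.chord B ∪ H.chord T).OrdConnected := H.ordConnected_chord_union
    (H.Iv_eq_vertsOver B ▸ hsB (H.mem_Iv_self hs)).2
    (H.Iv_eq_vertsOver T ▸ hsT (H.mem_Iv_self hs)).2
  have hdom {σ} (hσ : (onSide (H.Iv s) σ).Nonempty) :=
    H.Iv_leftmostLowest_onSide_union hX (union_subset (H.chord_subset_Icc hBR)
      (H.chord_subset_Icc hTR)) hK (hσ.mono (onSide_mono hsB)) (hσ.mono (onSide_mono hsT))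
  have h2 : H.Ipow s 2 = H.Iv B ∪ H.Iv T := by rw [Ipow_succ, H.bdtd_one_of_nonempty hm hp]
  have h3 : H.bdtd s 2 = (leftmostLowest (onSide (H.Iv B ∪ H.Iv T) (-1)),
      leftmostLowest (onSide (H.Iv B ∪ H.Iv T) 1)) := by
    have := H.bdtd_succ_of_nonempty (s := s) (k := 1)
      (h2 ▸ hm.mono (onSide_mono (hsB.trans subset_union_left)))
      (h2 ▸ hp.mono (onSide_mono (hsT.trans subset_union_right)))
    rwa [h2] at this
  rw [H.bdtd_one_of_nonempty hm hp]
  change H.Iv (H.bdtd s 2).1 ∪ H.Iv (H.bdtd s 2).2 =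
    (H.Iv (H.bdtd B 1).1 ∪ H.Iv (H.bdtd B 1).2) ∪ (H.Iv (H.bdtd T 1).1 ∪ H.Iv (H.bdtd T 1).2)
  rw [h3, H.bdtd_one_of_nonempty (hm.mono (onSide_mono hsB)) (hp.mono (onSide_mono hsB)),
    H.bdtd_one_of_nonempty (hm.mono (onSide_mono hsT)) (hp.mono (onSide_mono hsT)), hdom hm,
    hdom hp]
  exact union_union_union_comm _ _ _ _

end DoubleHistogram

/-- In a double histogram, for any vertex `s`,
`I^3(s) = I^2(bd(s)) ∪ I^2(td(s))`. -/
theorem I3_equals_extended_of_dominators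
    (H : DoubleHistogram) (s : ↥H.verts) :
    H.Ipow (s : ℝ × ℝ) 3 =
      H.Ipow (H.bdtd (s : ℝ × ℝ) 1).1 2 ∪ H.Ipow (H.bdtd (s : ℝ × ℝ) 1).2 2 := by
  obtain ⟨s, hs⟩ := s
  by_cases hne : (onSide (H.Ipow s 1) (-1)).Nonempty ∧ (onSide (H.Ipow s 1) 1).Nonempty
  · rw [DoubleHistogram.Ipow_one] at hne
    exact H.Ipow_three_of_nonempty hs hne.1 hne.2
  · have hbt := H.bdtd_succ_fst_eq_snd (k := 0) hne
    rw [← hbt, union_self]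
    exact H.Ipow_add_of_eq (Prod.ext rfl hbt.symm) 1
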